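/- arXiv:2605.06750 — 2 statements merged into one kernel-verified Lean document; each statement's English description precedes it below -/
import Mathlib

section
/- Let L ≥ 2 and fix a reference differential bit sequence b : Fin (L-1) → Bool. For every natural number n ≤ L-1, the number of keys s : Fin L → Bool such that the Hamming distance between D s and b is at most n, where (D s) l = xor (s l) (s (l+1)), equals 2 · ∑_{j=0}^{n} C(L-1,j). -/
/-!
A key is determined by its first bit together with its differential sequence, since
`s (l + 1) = xor (s l) (D s l)`; as both sides have `2 ^ L` elements, `s ↦ (s 0, D s)` is a
bijection, so `D` is exactly two-to-one onto all of `Fin (L - 1) → Bool`. It remains to count the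
Hamming ball of radius `n` around `b`: its points correspond, via the set of coordinates where
they differ from `b`, to the subsets of `Fin (L - 1)` of size at most `n`.
-/

open Finset Function

section Hamming

variable {ι : Type*} [Fintype ι] [DecidableEq ι]

def flipEquiv (b : ι → Bool) : Finset ι ≃ (ι → Bool) where
  toFun A i := xor (decide (i ∈ A)) (b i)
  invFun d := {i | d i ≠ b i}
  left_inv A := by ext i; by_cases h : i ∈ A <;> simp [h]
  right_inv d := by
    funext i
    simp only [mem_filter, mem_univ, true_and]
    cases d i <;> cases b i <;> rfl

theorem hammingDist_flipEquiv (b : ι → Bool) (A : Finset ι) :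
    hammingDist (flipEquiv b A) b = #A :=
  congrArg card ((flipEquiv b).symm_apply_apply A)

theorem card_hammingDist_eq_bool (b : ι → Bool) (j : ℕ) :
    #{d : ι → Bool | hammingDist d b = j} = (Fintype.card ι).choose j := by
  rw [← card_univ, ← card_powersetCard, powersetCard_eq_filter, powerset_univ]
  exact (card_equiv (flipEquiv b) fun A => by simp [hammingDist_flipEquiv]).symm

theorem card_hammingDist_le_bool (b : ι → Bool) (n : ℕ) :
    #{d : ι → Bool | hammingDist d b ≤ n} = ∑ j ∈ range (n + 1), (Fintype.card ι).choose j := by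
  rw [card_eq_sum_card_fiberwise (f := (hammingDist · b)) (t := range (n + 1))
    fun d hd => by simpa [Nat.lt_succ_iff] using hd]
  refine sum_congr rfl fun j hj => ?_
  rw [filter_filter, ← card_hammingDist_eq_bool b j]
  congr 1
  exact filter_congr fun d _ => by simp at hj; omega

end Hamming

/-- The paper's differential map `D`. -/
def diffSeq {L : ℕ} (s : Fin L → Bool) : Fin (L - 1) → Bool :=
  fun l => xor (s ⟨l.1, by have := l.2; omega⟩) (s ⟨l.1 + 1, by have := l.2; omega⟩)

theorem injective_head_diffSeq {L : ℕ} (hL : 0 < L) :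
    Injective fun s : Fin L → Bool => (s ⟨0, hL⟩, diffSeq s) := by
  intro s t hst
  simp only [Prod.mk.injEq] at hst
  obtain ⟨h0, hD⟩ := hst
  funext ⟨i, hi⟩
  induction i with
  | zero => exact h0
  | succ i ih =>
    have hD' := congrFun hD ⟨i, by omega⟩
    simp only [diffSeq, ih (by omega)] at hD'
    exact Bool.xor_right_inj.mp hD'

theorem bijective_head_diffSeq {L : ℕ} (hL : 0 < L) :
    Bijective fun s : Fin L → Bool => (s ⟨0, hL⟩, diffSeq s) := by
  refine (Fintype.bijective_iff_injective_and_card _).mpr ⟨injective_head_diffSeq hL, ?_⟩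
  simp only [Fintype.card_fun, Fintype.card_prod, Fintype.card_bool, Fintype.card_fin, ← pow_succ']
  congr 1
  omega

theorem card_filter_diffSeq {L : ℕ} (hL : 0 < L) (P : (Fin (L - 1) → Bool) → Prop)
    [DecidablePred P] : #{s : Fin L → Bool | P (diffSeq s)} = 2 * #{d | P d} := by
  rw [card_equiv (Equiv.ofBijective _ (bijective_head_diffSeq hL))
    (t := (univ : Finset Bool) ×ˢ ({d | P d} : Finset _)) fun s => by simp]
  simp

/-- The number of `L`-bit keys whose differential bit sequence
`(D s) l = xor (s l) (s (l+1))` lies within Hamming distance `n` of a reference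
sequence `b` is exactly `2 ∑_{j=0}^{n} C(L-1,j)`. -/
theorem card_keys_diff_within_hamming (L : ℕ) (hL : 2 ≤ L)
    (b : Fin (L - 1) → Bool) (n : ℕ) :
    (Finset.univ.filter (fun s : Fin L → Bool =>
        hammingDist
          (fun l : Fin (L - 1) =>
            xor (s ⟨l.1, by have := l.2; omega⟩) (s ⟨l.1 + 1, by have := l.2; omega⟩))
          b ≤ n)).card
      = 2 * ∑ j ∈ Finset.range (n + 1), (L - 1).choose j := by
  change #{s : Fin L → Bool | hammingDist (diffSeq s) b ≤ n} = _
  rw [card_filter_diffSeq (by omega) (hammingDist · b ≤ n), card_hammingDist_le_bool, Fintype.card_fin]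
end

section
/- Let q ≥ 1, K ≥ 1, and fix a reference differential sequence d : Fin K → ZMod q. For every natural number n ≤ K, the number of key sequences s : Fin (K+1) → ZMod q such that the Hamming distance between D s and d is at most n, where (D s) l = s (l+1) - s l, equals q · ∑_{j=0}^{n} C(K,j) · (q-1)^j. -/
/-!
A key sequence is determined by its first entry together with its differential sequence, the
inverse map being partial summation. So the keys in question correspond to pairs of a first
entry (`q` choices) and a sequence in the Hamming ball of radius `n` around `d`, and a sequence
at distance exactly `j` from `d` is a choice of `j` positions and of one of `q - 1` other values
at each of them.
-/

open Finset

section Hamming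

variable {ι β : Type*} [Fintype ι] [DecidableEq ι] [Fintype β] [DecidableEq β]

theorem card_filter_ne_eq (d : ι → β) (A : Finset ι) :
    #{t : ι → β | ({i | t i ≠ d i} : Finset ι) = A} = (Fintype.card β - 1) ^ #A := by
  have hfilter : ({t : ι → β | ({i | t i ≠ d i} : Finset ι) = A} : Finset (ι → β)) =
      Fintype.piFinset fun i => if i ∈ A then univ.erase (d i) else {d i} := by
    ext t
    simp only [mem_filter, mem_univ, true_and, Fintype.mem_piFinset, Finset.ext_iff]
    refine forall_congr' fun i => ?_
    split_ifs with hi <;> simp [hi]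
  rw [hfilter, Fintype.card_piFinset]
  simp only [apply_ite card, card_erase_of_mem (mem_univ _), card_univ, card_singleton]
  rw [prod_ite_mem, univ_inter, prod_const]

theorem card_hammingDist_eq (d : ι → β) (j : ℕ) :
    #{t : ι → β | hammingDist t d = j} = (Fintype.card ι).choose j * (Fintype.card β - 1) ^ j := by
  rw [card_eq_sum_card_fiberwise (f := fun t => ({i | t i ≠ d i} : Finset ι))
    (t := powersetCard j univ) fun t ht => by simpa [hammingDist] using ht,
    sum_congr rfl (g := fun _ => (Fintype.card β - 1) ^ j), sum_const, card_powersetCard,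
    card_univ, smul_eq_mul]
  intro A hA
  rw [← (mem_powersetCard.mp hA).2, ← card_filter_ne_eq d A, filter_filter]
  congr 1
  exact filter_congr fun t _ => and_iff_right_of_imp fun h => by rw [hammingDist, h]

theorem card_hammingDist_le (d : ι → β) (n : ℕ) :
    #{t : ι → β | hammingDist t d ≤ n} =
      ∑ j ∈ range (n + 1), (Fintype.card ι).choose j * (Fintype.card β - 1) ^ j := by
  rw [card_eq_sum_card_fiberwise (f := fun t => hammingDist t d) (t := range (n + 1))
    fun t ht => by simpa [Nat.lt_succ_iff] using ht]
  refine sum_congr rfl fun j hj => ?_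
  rw [← card_hammingDist_eq d j, filter_filter]
  congr 1
  exact filter_congr fun t _ => and_iff_right_of_imp fun h => by
    rw [h]; exact Nat.lt_succ_iff.mp (mem_range.mp hj)

end Hamming

def Fin.diffEquiv (G : Type*) [AddCommGroup G] (K : ℕ) :
    (Fin (K + 1) → G) ≃ (Fin K → G) × G where
  toFun s := (fun l => s l.succ - s l.castSucc, s 0)
  invFun p := p.2 +ᵥ Fin.partialSum p.1
  left_inv s := by simpa only [sub_eq_neg_add] using Fin.partialSum_left_neg s
  right_inv p := by
    ext l
    · dsimp only
      rw [Pi.vadd_apply, Pi.vadd_apply, vadd_eq_add, vadd_eq_add, add_sub_add_left_eq_sub,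
        sub_eq_neg_add, Fin.partialSum_right_neg]
    · simp

/-- The number of key sequences `s : Fin (K+1) → ZMod q` whose differential
sequence `(D s) l = s (l+1) - s l` lies within Hamming distance `n` of a
reference `d : Fin K → ZMod q` is exactly `q ∑_{j=0}^{n} C(K,j) (q-1)^j`. -/
theorem card_keys_diff_within_hamming_q (q K : ℕ)
    (d : Fin K → ZMod q) (n : ℕ) :
    Nat.card {s : Fin (K + 1) → ZMod q //
        hammingDist
          (fun l : Fin K =>
            s ⟨l.1 + 1, by have := l.2; omega⟩ - s ⟨l.1, by have := l.2; omega⟩)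
          d ≤ n}
      = q * ∑ j ∈ Finset.range (n + 1), K.choose j * (q - 1) ^ j := by
  have e : {s : Fin (K + 1) → ZMod q // hammingDist (fun l => s l.succ - s l.castSucc) d ≤ n} ≃
      {t : Fin K → ZMod q // hammingDist t d ≤ n} × ZMod q :=
    ((Fin.diffEquiv (ZMod q) K).subtypeEquiv fun _ => Iff.rfl).trans
      (Equiv.prodSubtypeFstEquivSubtypeProd (p := fun t => hammingDist t d ≤ n))
  refine (Nat.card_congr e).trans ?_
  rw [Nat.card_prod, Nat.card_zmod, mul_comm]
  obtain rfl | hq := q.eq_zero_or_pos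
  · -- `ZMod 0 = ℤ` is infinite, so `Nat.card` is `0` on the left, as is the factor `q` on the right.
    simp
  have : NeZero q := ⟨hq.ne'⟩
  rw [Nat.card_eq_fintype_card, Fintype.card_subtype, card_hammingDist_le, Fintype.card_fin,
    ZMod.card]
end
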